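/- Assume ℚ ⊆ k and let D ∈ U^p(R;Δ) with R = End_k(A). Then D is a (p,Δ)-variate Hasse–Schmidt derivation of A over k if and only if ε(D) = D* χ_R(D) lies in Der_k(A)[[s]]_Δ, i.e. all coefficients of the Euler logarithmic derivative of D are k-derivations of A. -/

import Mathlib

def IsCoideal {p : ℕ} (Δ : Set (Fin p →₀ ℕ)) : Prop :=
  Δ.Nonempty ∧ ∀ α ∈ Δ, ∀ β ≤ α, β ∈ Δ

def EqOnD {p : ℕ} {R : Type*} [Ring R] (Δ : Set (Fin p →₀ ℕ))
    (f g : MvPowerSeries (Fin p) R) : Prop :=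
  ∀ α ∈ Δ, MvPowerSeries.coeff (R := R) α f = MvPowerSeries.coeff (R := R) α g

def IsHS {p : ℕ} {k A : Type*} [CommRing k] [CommRing A] [Algebra k A]
    (Δ : Set (Fin p →₀ ℕ)) (D : MvPowerSeries (Fin p) (Module.End k A)) : Prop :=
  MvPowerSeries.coeff (R := Module.End k A) 0 D = 1 ∧
    ∀ α ∈ Δ, ∀ x y : A,
      MvPowerSeries.coeff (R := Module.End k A) α D (x * y) =
        ∑ z ∈ Finset.HasAntidiagonal.antidiagonal α,
          (MvPowerSeries.coeff (R := Module.End k A) z.1 D x) *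
            (MvPowerSeries.coeff (R := Module.End k A) z.2 D y)

noncomputable def chiE {p : ℕ} {R : Type*} [Ring R]
    (f : MvPowerSeries (Fin p) R) : MvPowerSeries (Fin p) R :=
  fun α => (∑ i, α i) • MvPowerSeries.coeff (R := R) α f

/-!
Write `Y_α(x, y) = D_α(xy) - ∑_{β+γ=α} D_β(x) D_γ(y)` for the Hasse–Schmidt defect of `D` and
`Z_α(x, y) = ε_α(xy) - x ε_α(y) - ε_α(x) y` for the derivation defect of `ε = D* χ(D)`.
Since `D ε = χ(D)` on `Δ`, expanding `|α| D_α(xy) = ∑_{β+γ=α} D_β(ε_γ(xy))` gives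
`|α| Y_α(x, y) = ∑_{β+γ=α} (D_β(Z_γ(x, y)) + Y_β(x, ε_γ y) + Y_β(ε_γ x, y))`.
If `Y` vanishes, this says `D Z = 0`, hence `Z = 0` as `D_0 = 1`. If `Z` vanishes, then, as
`ε_0 = 0`, it expresses `|α| Y_α` through the `Y_β` with `β < α`, so `Y = 0` by induction,
dividing by `|α|` over `ℚ`.
-/

open Finset MvPowerSeries

section Antidiagonal

variable {μ M : Type*} [AddCommMonoid μ] [HasAntidiagonal μ] [AddCommMonoid M]

theorem Finset.sum_antidiagonal_antidiagonal_assoc (α : μ) (F : μ → μ → μ → M) :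
    ∑ p ∈ antidiagonal α, ∑ q ∈ antidiagonal p.1, F q.1 q.2 p.2 =
      ∑ p ∈ antidiagonal α, ∑ q ∈ antidiagonal p.2, F p.1 q.1 q.2 := by
  simp only [Finset.sum_sigma']
  apply Finset.sum_nbij' (fun ⟨⟨_, j⟩, ⟨k, l⟩⟩ ↦ ⟨(k, l + j), (l, j)⟩)
    (fun ⟨⟨i, _⟩, ⟨k, l⟩⟩ ↦ ⟨(i + k, l), (i, k)⟩) <;> aesop (add simp [add_assoc])

theorem Finset.sum_antidiagonal_antidiagonal_swap (α : μ) (F : μ → μ → μ → M) :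
    ∑ p ∈ antidiagonal α, ∑ q ∈ antidiagonal p.1, F q.1 q.2 p.2 =
      ∑ p ∈ antidiagonal α, ∑ q ∈ antidiagonal p.1, F q.1 p.2 q.2 := by
  simp only [Finset.sum_sigma']
  apply Finset.sum_nbij' (fun ⟨⟨_, j⟩, ⟨k, l⟩⟩ ↦ ⟨(k + j, l), (k, j)⟩)
    (fun ⟨⟨_, j⟩, ⟨k, l⟩⟩ ↦ ⟨(k + j, l), (k, j)⟩) <;>
    aesop (add simp [add_assoc, add_comm, add_left_comm])

end Antidiagonal

variable {p : ℕ} {Δ : Set (Fin p →₀ ℕ)}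

theorem IsCoideal.fst_mem (hΔ : IsCoideal Δ) {α : Fin p →₀ ℕ} (hα : α ∈ Δ)
    {q : (Fin p →₀ ℕ) × (Fin p →₀ ℕ)} (hq : q ∈ antidiagonal α) : q.1 ∈ Δ :=
  hΔ.2 α hα q.1 (HasAntidiagonal.antidiagonal.fst_le hq)

theorem IsCoideal.snd_mem (hΔ : IsCoideal Δ) {α : Fin p →₀ ℕ} (hα : α ∈ Δ)
    {q : (Fin p →₀ ℕ) × (Fin p →₀ ℕ)} (hq : q ∈ antidiagonal α) : q.2 ∈ Δ :=
  hΔ.2 α hα q.2 (HasAntidiagonal.antidiagonal.snd_le hq)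

theorem EqOnD.mul_right {R : Type*} [Ring R] (hΔ : IsCoideal Δ)
    {f g : MvPowerSeries (Fin p) R} (h : EqOnD Δ f g) (u : MvPowerSeries (Fin p) R) :
    EqOnD Δ (f * u) (g * u) := by
  intro α hα
  simp only [coeff_mul]
  exact Finset.sum_congr rfl fun q hq ↦ by rw [h q.1 (hΔ.fst_mem hα hq)]

theorem coeff_chiE {R : Type*} [Ring R] (f : MvPowerSeries (Fin p) R) (α : Fin p →₀ ℕ) :
    coeff α (chiE f) = α.degree • coeff α f := by
  rw [Finsupp.degree_eq_sum]
  rfl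

theorem coeff_zero_mul_chiE {R : Type*} [Ring R] (f g : MvPowerSeries (Fin p) R) :
    coeff 0 (f * chiE g) = 0 := by
  rw [coeff_zero_eq_constantCoeff_apply, map_mul, ← coeff_zero_eq_constantCoeff_apply (chiE g),
    coeff_chiE, map_zero, zero_smul, mul_zero]

theorem eq_zero_of_nsmul_eq_zero_of_algebra_rat {k M : Type*} [Semiring k] [Algebra ℚ k]
    [AddCommMonoid M] [Module k M] {n : ℕ} (hn : n ≠ 0) {m : M} (h : n • m = 0) : m = 0 := by
  have hunit : IsUnit (n : k) := by
    rw [← map_natCast (algebraMap ℚ k)]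
    exact (IsUnit.mk0 _ (Nat.cast_ne_zero.mpr hn)).map _
  rwa [← Nat.cast_smul_eq_nsmul k, hunit.smul_eq_zero] at h

theorem eq_zero_of_sum_antidiagonal_coeff_apply_eq_zero {R M : Type*} [Semiring R]
    [AddCommMonoid M] [Module R M] (hΔ : IsCoideal Δ) {D : MvPowerSeries (Fin p) (Module.End R M)}
    (hD0 : coeff 0 D = 1) {w : (Fin p →₀ ℕ) → M}
    (hw : ∀ α ∈ Δ, ∑ q ∈ antidiagonal α, coeff q.1 D (w q.2) = 0) : ∀ α ∈ Δ, w α = 0 := by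
  intro α
  induction α using WellFoundedLT.induction with
  | _ α ih =>
  intro hα
  have h := hw α hα
  rwa [sum_eq_single (0, α), hD0, Module.End.one_apply] at h
  · rintro q hq hq0
    have hlt : q.2 < α := by
      refine lt_of_le_of_ne (HasAntidiagonal.antidiagonal.snd_le hq) fun h ↦ hq0 ?_
      rw [HasAntidiagonal.mem_antidiagonal, h, add_eq_right] at hq
      exact Prod.ext hq h
    rw [ih q.2 hlt (hΔ.snd_mem hα hq), map_zero]
  · simp

section HasseSchmidt

variable {k A : Type*} [CommRing k] [CommRing A] [Algebra k A]

noncomputable def hsDefect (D : MvPowerSeries (Fin p) (Module.End k A)) (α : Fin p →₀ ℕ)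
    (x y : A) : A :=
  coeff α D (x * y) - ∑ q ∈ antidiagonal α, coeff q.1 D x * coeff q.2 D y

def derivationDefect (E : MvPowerSeries (Fin p) (Module.End k A)) (α : Fin p →₀ ℕ) (x y : A) :
    A :=
  coeff α E (x * y) - x * coeff α E y - coeff α E x * y

theorem hsDefect_eq_zero_iff (D : MvPowerSeries (Fin p) (Module.End k A)) (α : Fin p →₀ ℕ)
    (x y : A) :
    hsDefect D α x y = 0 ↔
      coeff α D (x * y) = ∑ q ∈ antidiagonal α, coeff q.1 D x * coeff q.2 D y :=
  sub_eq_zero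

theorem derivationDefect_eq_zero_iff (E : MvPowerSeries (Fin p) (Module.End k A))
    (α : Fin p →₀ ℕ) (x y : A) :
    derivationDefect E α x y = 0 ↔ coeff α E (x * y) = x * coeff α E y + coeff α E x * y := by
  rw [derivationDefect, sub_sub, sub_eq_zero]

variable {D ε : MvPowerSeries (Fin p) (Module.End k A)}

theorem sum_coeff_apply_eq_degree_smul (hχ : EqOnD Δ (D * ε) (chiE D)) {α : Fin p →₀ ℕ}
    (hα : α ∈ Δ) (z : A) :
    ∑ q ∈ antidiagonal α, coeff q.1 D (coeff q.2 ε z) = α.degree • coeff α D z := by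
  have h := LinearMap.congr_fun (hχ α hα) z
  rwa [coeff_mul, LinearMap.sum_apply, coeff_chiE, LinearMap.smul_apply] at h

theorem degree_smul_hsDefect (hΔ : IsCoideal Δ) (hχ : EqOnD Δ (D * ε) (chiE D))
    {α : Fin p →₀ ℕ} (hα : α ∈ Δ) (x y : A) :
    α.degree • hsDefect D α x y = ∑ q ∈ antidiagonal α,
      (coeff q.1 D (derivationDefect ε q.2 x y) + hsDefect D q.1 x (coeff q.2 ε y) +
        hsDefect D q.1 (coeff q.2 ε x) y) := by
  have key {δ} (hδ : δ ∈ Δ) := sum_coeff_apply_eq_degree_smul hχ hδ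
  have hx : ∑ q ∈ antidiagonal α, ∑ r ∈ antidiagonal q.1,
      coeff r.1 D (coeff q.2 ε x) * coeff r.2 D y =
      ∑ q ∈ antidiagonal α, (q.1.degree • coeff q.1 D x) * coeff q.2 D y := by
    rw [← sum_antidiagonal_antidiagonal_swap α
      fun a b c ↦ coeff a D (coeff b ε x) * coeff c D y]
    exact sum_congr rfl fun q hq ↦ by rw [← sum_mul, key (hΔ.fst_mem hα hq)]
  have hy : ∑ q ∈ antidiagonal α, ∑ r ∈ antidiagonal q.1,
      coeff r.1 D x * coeff r.2 D (coeff q.2 ε y) =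
      ∑ q ∈ antidiagonal α, coeff q.1 D x * (q.2.degree • coeff q.2 D y) := by
    rw [sum_antidiagonal_antidiagonal_assoc α
      fun a b c ↦ coeff a D x * coeff b D (coeff c ε y)]
    exact sum_congr rfl fun q hq ↦ by rw [← mul_sum, key (hΔ.snd_mem hα hq)]
  have hxy : α.degree • ∑ q ∈ antidiagonal α, coeff q.1 D x * coeff q.2 D y =
      ∑ q ∈ antidiagonal α, ((q.1.degree • coeff q.1 D x) * coeff q.2 D y +
        coeff q.1 D x * (q.2.degree • coeff q.2 D y)) := by
    rw [smul_sum]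
    refine sum_congr rfl fun q hq ↦ ?_
    rw [← mem_antidiagonal.mp hq, map_add, add_smul, smul_mul_assoc, mul_smul_comm]
  simp only [hsDefect, derivationDefect, map_sub, smul_sub, sum_add_distrib, sum_sub_distrib,
    key hα (x * y), hx, hy, hxy]
  abel

theorem derivationDefect_eq_zero (hΔ : IsCoideal Δ) (hD0 : coeff 0 D = 1)
    (hχ : EqOnD Δ (D * ε) (chiE D)) (hD : ∀ α ∈ Δ, ∀ x y, hsDefect D α x y = 0) :
    ∀ α ∈ Δ, ∀ x y, derivationDefect ε α x y = 0 := by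
  intro α hα x y
  refine eq_zero_of_sum_antidiagonal_coeff_apply_eq_zero hΔ hD0
    (w := fun γ ↦ derivationDefect ε γ x y) (fun β hβ ↦ ?_) α hα
  have h := degree_smul_hsDefect hΔ hχ hβ x y
  rw [hD β hβ, smul_zero] at h
  rw [h]
  refine sum_congr rfl fun q hq ↦ ?_
  rw [hD q.1 (hΔ.fst_mem hβ hq), hD q.1 (hΔ.fst_mem hβ hq), add_zero, add_zero]

theorem hsDefect_eq_zero [Algebra ℚ k] (hΔ : IsCoideal Δ) (hD0 : coeff 0 D = 1)
    (hχ : EqOnD Δ (D * ε) (chiE D)) (hε0 : coeff 0 ε = 0)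
    (hε : ∀ α ∈ Δ, ∀ x y, derivationDefect ε α x y = 0) :
    ∀ α ∈ Δ, ∀ x y, hsDefect D α x y = 0 := by
  intro α
  induction α using WellFoundedLT.induction with
  | _ α ih =>
  intro hα x y
  rcases eq_or_ne α 0 with rfl | hα0
  · simp [hsDefect, hD0]
  refine eq_zero_of_nsmul_eq_zero_of_algebra_rat (k := k)
    ((Finsupp.degree_eq_zero_iff α).not.mpr hα0) ?_
  rw [degree_smul_hsDefect hΔ hχ hα]
  refine sum_eq_zero fun q hq ↦ ?_
  rw [hε q.2 (hΔ.snd_mem hα hq), map_zero, zero_add]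
  rcases eq_or_ne q.2 0 with h | h
  · simp [h, hε0, hsDefect]
  have hlt : q.1 < α := by
    refine lt_of_le_of_ne (HasAntidiagonal.antidiagonal.fst_le hq) fun h' ↦ h ?_
    rwa [HasAntidiagonal.mem_antidiagonal, h', add_eq_left] at hq
  rw [ih q.1 hlt (hΔ.fst_mem hα hq), ih q.1 hlt (hΔ.fst_mem hα hq), add_zero]

end HasseSchmidt

theorem isHS_iff_eps_derivation_general {p : ℕ} {k A : Type*} [CommRing k] [Algebra ℚ k]
    [CommRing A] [Algebra k A]
    (Δ : Set (Fin p →₀ ℕ)) (hΔ : IsCoideal Δ)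
    (D Ds : MvPowerSeries (Fin p) (Module.End k A))
    (hD0 : MvPowerSeries.coeff (R := Module.End k A) 0 D = 1)
    (h1 : EqOnD Δ (D * Ds) 1) :
    IsHS Δ D ↔
      ∀ α ∈ Δ, ∀ x y : A,
        MvPowerSeries.coeff (R := Module.End k A) α (Ds * chiE D) (x * y) =
          x * MvPowerSeries.coeff (R := Module.End k A) α (Ds * chiE D) y +
            MvPowerSeries.coeff (R := Module.End k A) α (Ds * chiE D) x * y := by
  have hχ : EqOnD Δ (D * (Ds * chiE D)) (chiE D) := by
    simpa only [mul_assoc, one_mul] using h1.mul_right hΔ (chiE D)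
  simp only [IsHS, hD0, true_and, ← hsDefect_eq_zero_iff, ← derivationDefect_eq_zero_iff]
  exact ⟨derivationDefect_eq_zero hΔ hD0 hχ,
    hsDefect_eq_zero hΔ hD0 hχ (coeff_zero_mul_chiE Ds D)⟩

/-- Assume `ℚ ⊆ k`. A unit `D ∈ U^p(End_k(A);Δ)` (with inverse `Ds`) is a `(p,Δ)`-variate
Hasse–Schmidt derivation iff all coefficients of `ε(D) = D* χ_R(D)` on `Δ` are
`k`-derivations of `A`. -/
theorem isHS_iff_eps_derivation {p : ℕ} {k A : Type*} [CommRing k] [Algebra ℚ k]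
    [CommRing A] [Algebra k A]
    (Δ : Set (Fin p →₀ ℕ)) (hΔ : IsCoideal Δ)
    (D Ds : MvPowerSeries (Fin p) (Module.End k A))
    (hD0 : MvPowerSeries.coeff (R := Module.End k A) 0 D = 1)
    (hDs0 : MvPowerSeries.coeff (R := Module.End k A) 0 Ds = 1)
    (h1 : EqOnD Δ (D * Ds) 1) (h2 : EqOnD Δ (Ds * D) 1) :
    IsHS Δ D ↔
      ∀ α ∈ Δ, ∀ x y : A,
        MvPowerSeries.coeff (R := Module.End k A) α (Ds * chiE D) (x * y) =
          x * MvPowerSeries.coeff (R := Module.End k A) α (Ds * chiE D) y +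
            MvPowerSeries.coeff (R := Module.End k A) α (Ds * chiE D) x * y :=
  isHS_iff_eps_derivation_general Δ hΔ D Ds hD0 h1
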